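/- arXiv:1807.09376 — 7 statements merged into one kernel-verified Lean document; each statement's English description precedes it below -/
import Mathlib

section
/- If a graph F strongly arrows the pair (G,H) (i.e., every red-blue edge colouring of F contains a red induced copy of G or a blue induced copy of H), then the disjoint union of s+t-1 copies of F strongly arrows the pair (sG, tH), where xG denotes the vertex-disjoint union of x copies of G. -/
open SimpleGraph

/-- The disjoint union of `s` copies of the graph `G`. -/
def SimpleGraph.Copies {β : Type*} (s : ℕ) (G : SimpleGraph β) :
    SimpleGraph (Fin s × β) where
  Adj x y := x.1 = y.1 ∧ G.Adj x.2 y.2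
  symm := ⟨fun x y h => ⟨h.1.symm, h.2.symm⟩⟩
  loopless := ⟨fun x h => G.loopless.irrefl x.2 h.2⟩

/-- `F` strongly arrows `(G, H)`: every red-blue (`true`/`false`) colouring of the
edges of `F` yields a red induced copy of `G` or a blue induced copy of `H`. -/
def StronglyArrows {α β γ : Type*}
    (F : SimpleGraph α) (G : SimpleGraph β) (H : SimpleGraph γ) : Prop :=
  ∀ c : Sym2 α → Bool,
    (∃ f : G ↪g F, ∀ a b : β, G.Adj a b → c s(f a, f b) = true) ∨
    (∃ f : H ↪g F, ∀ a b : γ, H.Adj a b → c s(f a, f b) = false)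

/-- The induced Ramsey number `IR(G, H)`. -/
noncomputable def IR {β γ : Type*} (G : SimpleGraph β) (H : SimpleGraph γ) : ℕ :=
  sInf {n : ℕ | ∃ F : SimpleGraph (Fin n), StronglyArrows F G H}

/-- The single-edge graph `K_2`. -/
def K2 : SimpleGraph (Fin 2) := ⊤

/-- Two disjoint edges `2K_2`. -/
def twoK2 : SimpleGraph (Fin 2 × Fin 2) := SimpleGraph.Copies 2 K2

/-!
Restricting a colouring of `(s + t - 1) F` to each copy of `F` gives, in that copy, a red
induced `G` or a blue induced `H`. By pigeonhole, `s` copies contain a red `G` or `t` copies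
contain a blue `H`, and these copies of `G` (resp. `H`) lying in distinct copies of `F`
together form an induced `sG` (resp. `tH`).
-/

theorem exists_embedding_forall_or_forall_not {ι : Type*} [Fintype ι] (P : ι → Prop)
    (s t : ℕ) (hcard : s + t ≤ Fintype.card ι + 1) :
    (∃ φ : Fin s ↪ ι, ∀ i, P (φ i)) ∨ (∃ ψ : Fin t ↪ ι, ∀ i, ¬P (ψ i)) := by
  classical
  have hsplit := Fintype.card_subtype_compl P
  have hle := Fintype.card_subtype_le P
  by_cases hs : s ≤ Fintype.card {i // P i}
  · left
    obtain ⟨e⟩ := Function.Embedding.nonempty_of_card_le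
      (α := Fin s) (β := {i // P i}) (by simpa using hs)
    exact ⟨e.trans (Function.Embedding.subtype P), fun i => (e i).2⟩
  · right
    obtain ⟨e⟩ := Function.Embedding.nonempty_of_card_le
      (α := Fin t) (β := {i // ¬P i}) (by simp only [Fintype.card_fin]; omega)
    exact ⟨e.trans (Function.Embedding.subtype _), fun i => (e i).2⟩

namespace SimpleGraph.Copies

variable {α β : Type*} {n k : ℕ} {F : SimpleGraph α} {G : SimpleGraph β}

def embedding (φ : Fin k ↪ Fin n) (f : Fin k → G ↪g F) : Copies k G ↪g Copies n F where
  toFun x := (φ x.1, f x.1 x.2)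
  inj' := by
    rintro ⟨i, a⟩ ⟨j, b⟩ hxy
    change (φ i, f i a) = (φ j, f j b) at hxy
    obtain ⟨hij, hab⟩ := Prod.mk.inj hxy
    obtain rfl := φ.injective hij
    rw [(f i).injective hab]
  map_rel_iff' := by
    rintro ⟨i, a⟩ ⟨j, b⟩
    change φ i = φ j ∧ F.Adj (f i a) (f j b) ↔ i = j ∧ G.Adj a b
    refine ⟨fun ⟨hij, hab⟩ => ?_, fun ⟨hij, hab⟩ => ?_⟩
    · obtain rfl := φ.injective hij
      exact ⟨rfl, (f i).map_rel_iff.mp hab⟩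
    · subst hij
      exact ⟨rfl, (f i).map_rel_iff.mpr hab⟩

theorem embedding_colour {γ : Type*} (c : Sym2 (Fin n × α) → γ) (col : γ)
    (φ : Fin k ↪ Fin n) (f : Fin k → G ↪g F)
    (hf : ∀ i a b, G.Adj a b → c s((φ i, f i a), (φ i, f i b)) = col) (x y : Fin k × β)
    (hxy : (Copies k G).Adj x y) : c s(embedding φ f x, embedding φ f y) = col := by
  obtain ⟨i, a⟩ := x
  obtain ⟨j, b⟩ := y
  obtain ⟨rfl, hab⟩ := hxy
  exact hf i a b hab

end SimpleGraph.Copies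

theorem StronglyArrows.exists_on_copy {ι α β γ : Type*} {F : SimpleGraph α} {G : SimpleGraph β}
    {H : SimpleGraph γ} (h : StronglyArrows F G H) (c : Sym2 (ι × α) → Bool) (i : ι) :
    (∃ f : G ↪g F, ∀ a b, G.Adj a b → c s((i, f a), (i, f b)) = true) ∨
    (∃ f : H ↪g F, ∀ a b, H.Adj a b → c s((i, f a), (i, f b)) = false) :=
  h fun e => c (e.map (Prod.mk i))

theorem stmt0_general {α β γ : Type*} (F : SimpleGraph α) (G : SimpleGraph β)
    (H : SimpleGraph γ) (s t : ℕ)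
    (h : StronglyArrows F G H) :
    StronglyArrows (SimpleGraph.Copies (s + t - 1) F)
      (SimpleGraph.Copies s G) (SimpleGraph.Copies t H) := by
  intro c
  obtain ⟨φ, hφ⟩ | ⟨ψ, hψ⟩ := exists_embedding_forall_or_forall_not
    (fun i => ∃ f : G ↪g F, ∀ a b, G.Adj a b → c s((i, f a), (i, f b)) = true) s t
    (by simp only [Fintype.card_fin]; omega)
  · choose f hf using hφ
    exact Or.inl ⟨Copies.embedding φ f, Copies.embedding_colour c true φ f hf⟩
  · choose f hf using fun i => (h.exists_on_copy c (ψ i)).resolve_left (hψ i)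
    exact Or.inr ⟨Copies.embedding ψ f, Copies.embedding_colour c false ψ f hf⟩

theorem stmt0 {α β γ : Type*} (F : SimpleGraph α) (G : SimpleGraph β)
    (H : SimpleGraph γ) (s t : ℕ) (hs : 1 ≤ s) (ht : 1 ≤ t)
    (h : StronglyArrows F G H) :
    StronglyArrows (SimpleGraph.Copies (s + t - 1) F)
      (SimpleGraph.Copies s G) (SimpleGraph.Copies t H) :=
  stmt0_general F G H s t h
end

section
/- For all graphs G and H and positive integers s,t, the induced Ramsey number satisfies IR(sG, tH) ≤ (s+t-1)·IR(G,H). -/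
open SimpleGraph

/-!
Colour `(s + t - 1) F` with `F → (G, H)`. Each copy of `F` contains a red induced `G` or a blue
induced `H`; by pigeonhole at least `s` copies contain a red `G` or at least `t` contain a blue `H`,
and copies in distinct components of `(s + t - 1) F` together form an induced `sG` or `tH`.
-/

namespace SimpleGraph

def Copies.embedding_s1 {β : Type*} (G : SimpleGraph β) {m : ℕ} (k : Fin m) :
    G ↪g G.Copies m where
  toFun b := (k, b)
  inj' _ _ h := (Prod.mk.inj h).2
  map_rel_iff' := ⟨And.right, And.intro rfl⟩

def Copies.embeddingOfFamily {α β : Type*} {F : SimpleGraph α} {G : SimpleGraph β} {s m : ℕ}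
    (σ : Fin s ↪ Fin m) (f : Fin s → (G ↪g F)) : G.Copies s ↪g F.Copies m where
  toFun p := (σ p.1, f p.1 p.2)
  inj' := by
    rintro ⟨i, a⟩ ⟨j, b⟩ h
    obtain ⟨hij, hab⟩ := Prod.mk.inj h
    obtain rfl := σ.injective hij
    exact Prod.ext rfl ((f i).injective hab)
  map_rel_iff' := by
    rintro ⟨i, a⟩ ⟨j, b⟩
    change σ i = σ j ∧ F.Adj (f i a) (f j b) ↔ i = j ∧ G.Adj a b
    constructor
    · rintro ⟨hij, hab⟩
      obtain rfl := σ.injective hij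
      exact ⟨rfl, (f i).map_rel_iff.mp hab⟩
    · rintro ⟨rfl, hab⟩
      exact ⟨rfl, (f i).map_rel_iff.mpr hab⟩

end SimpleGraph

open SimpleGraph

lemma Fintype.exists_embedding_of_forall_or {ι : Type*} [Fintype ι] {P Q : ι → Prop}
    {s t : ℕ} (hst : s + t ≤ Fintype.card ι + 1) (hPQ : ∀ k, P k ∨ Q k) :
    (∃ σ : Fin s ↪ ι, ∀ i, P (σ i)) ∨ (∃ σ : Fin t ↪ ι, ∀ i, Q (σ i)) := by
  classical
  have embedding_of_card_le {R : ι → Prop} {n : ℕ} (h : n ≤ Fintype.card {k // R k}) :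
      ∃ σ : Fin n ↪ ι, ∀ i, R (σ i) := by
    obtain ⟨σ⟩ := Function.Embedding.nonempty_of_card_le (α := Fin n) (by simpa using h)
    exact ⟨σ.trans (Function.Embedding.subtype R), fun i => (σ i).2⟩
  by_cases hs : s ≤ Fintype.card {k // P k}
  · exact Or.inl (embedding_of_card_le hs)
  · refine Or.inr (embedding_of_card_le (R := Q) ?_)
    have hcard := Fintype.card_subtype_compl P
    have hQ : Fintype.card {k // ¬P k} ≤ Fintype.card {k // Q k} :=
      Fintype.card_subtype_mono _ _ fun k hk => (hPQ k).resolve_left hk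
    omega

namespace StronglyArrows

variable {α α' β γ : Type*} {F : SimpleGraph α} {F' : SimpleGraph α'}
  {G : SimpleGraph β} {H : SimpleGraph γ}

lemma of_embedding (e : F ↪g F') (h : StronglyArrows F G H) : StronglyArrows F' G H := by
  intro c
  rcases h (fun p => c (p.map e)) with ⟨f, hf⟩ | ⟨f, hf⟩
  · exact Or.inl ⟨e.comp f, hf⟩
  · exact Or.inr ⟨e.comp f, hf⟩

lemma of_copies {s t : ℕ} (hs : 1 ≤ s) (ht : 1 ≤ t)
    (h : StronglyArrows F (G.Copies s) (H.Copies t)) : StronglyArrows F G H := by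
  intro c
  rcases h c with ⟨f, hf⟩ | ⟨f, hf⟩
  · exact Or.inl ⟨f.comp (Copies.embedding_s1 G ⟨0, hs⟩), fun _ _ h => hf _ _ ⟨rfl, h⟩⟩
  · exact Or.inr ⟨f.comp (Copies.embedding_s1 H ⟨0, ht⟩), fun _ _ h => hf _ _ ⟨rfl, h⟩⟩

lemma copies (hF : StronglyArrows F G H) (s t : ℕ) :
    StronglyArrows (F.Copies (s + t - 1)) (G.Copies s) (H.Copies t) := by
  intro c
  have hcopy (k : Fin (s + t - 1)) := hF (fun p => c (p.map (Copies.embedding_s1 F k)))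
  rcases Fintype.exists_embedding_of_forall_or (s := s) (t := t) (by simp; omega) hcopy with
    ⟨σ, hred⟩ | ⟨σ, hblue⟩
  · choose f hf using hred
    refine Or.inl ⟨Copies.embeddingOfFamily σ f, ?_⟩
    rintro ⟨i, a⟩ ⟨_, b⟩ ⟨rfl, hab⟩
    exact hf i a b hab
  · choose f hf using hblue
    refine Or.inr ⟨Copies.embeddingOfFamily σ f, ?_⟩
    rintro ⟨i, a⟩ ⟨_, b⟩ ⟨rfl, hab⟩
    exact hf i a b hab

end StronglyArrows

lemma IR_le_card {α β γ : Type*} [Fintype α] {F : SimpleGraph α} {G : SimpleGraph β}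
    {H : SimpleGraph γ} (h : StronglyArrows F G H) : IR G H ≤ Fintype.card α :=
  Nat.sInf_le ⟨_, h.of_embedding (Iso.map (Fintype.equivFin α) F).toEmbedding⟩

theorem stmt1_general {β γ : Type*}
    (G : SimpleGraph β) (H : SimpleGraph γ) (s t : ℕ) (hs : 1 ≤ s) (ht : 1 ≤ t) :
    IR (SimpleGraph.Copies s G) (SimpleGraph.Copies t H) ≤ (s + t - 1) * IR G H := by
  by_cases hGH : {n : ℕ | ∃ F : SimpleGraph (Fin n), StronglyArrows F G H}.Nonempty
  · obtain ⟨F, hF⟩ : ∃ F : SimpleGraph (Fin (IR G H)), StronglyArrows F G H :=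
      Nat.sInf_mem hGH
    simpa using IR_le_card (hF.copies s t)
  · -- `IR G H` is the junk value `sInf ∅ = 0`, so `IR (sG) (tH)` must be `0` as well.
    have hcopies : {n : ℕ | ∃ F : SimpleGraph (Fin n),
        StronglyArrows F (G.Copies s) (H.Copies t)} = ∅ :=
      Set.eq_empty_of_forall_notMem fun n ⟨F, hF⟩ => hGH ⟨n, F, hF.of_copies hs ht⟩
    rw [IR, hcopies, Nat.sInf_empty]
    exact Nat.zero_le _

theorem stmt1 {β γ : Type*} [Fintype β] [Fintype γ]
    (G : SimpleGraph β) (H : SimpleGraph γ) (s t : ℕ) (hs : 1 ≤ s) (ht : 1 ≤ t) :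
    IR (SimpleGraph.Copies s G) (SimpleGraph.Copies t H) ≤ (s + t - 1) * IR G H :=
  stmt1_general G H s t hs ht
end

section
/- Let G be a graph with no isolated vertices. Then IR(G, 2K_2) ≥ |V(G)| + 2. -/
open SimpleGraph

/-
Since `sInf ∅ = 0`, the bound needs a host graph that arrows `(G, 2K₂)` at all: two disjoint
copies of `G` do, because either some copy has no blue edge, or blue edges taken from the two
copies form an induced blue `2K₂`.

For the bound itself, take a clique `S` of a host graph `F` (an edge `uv`) and colour blue exactly
the edges meeting `S`. Each edge of a blue induced `2K₂` would contain a vertex of `S`, and these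
two vertices are adjacent, which is impossible. So there is a red induced copy of `G`; as `G` has
no isolated vertex, each of its vertices lies on a red edge, hence outside `S`.
-/

section

variable {α α' β γ : Type*}

def SimpleGraph.Copies.incl (s : ℕ) (G : SimpleGraph β) (i : Fin s) : G ↪g Copies s G where
  toFun a := (i, a)
  inj' _ _ h := (Prod.ext_iff.mp h).2
  map_rel_iff' := ⟨And.right, And.intro rfl⟩

def SimpleGraph.Copies.map {s : ℕ} {H : SimpleGraph γ} {G : SimpleGraph β}
    (f : Fin s → H ↪g G) : Copies s H ↪g Copies s G where
  toFun x := (x.1, f x.1 x.2)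
  inj' := by
    rintro ⟨i, a⟩ ⟨j, b⟩ h
    simp only [Prod.mk.injEq] at h
    obtain ⟨rfl, h⟩ := h
    rw [(f i).injective h]
  map_rel_iff' := by
    rintro ⟨i, a⟩ ⟨j, b⟩
    constructor
    · rintro ⟨rfl, h⟩
      exact ⟨rfl, (f i).map_rel_iff.mp h⟩
    · rintro ⟨rfl, h⟩
      exact ⟨rfl, (f i).map_rel_iff.mpr h⟩

def K2.embeddingOfAdj {G : SimpleGraph β} {x y : β} (h : G.Adj x y) : K2 ↪g G where
  toFun := ![x, y]
  inj' i j := by fin_cases i <;> fin_cases j <;> simp [h.ne, h.ne.symm]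
  map_rel_iff' {i j} := by
    change G.Adj (![x, y] i) (![x, y] j) ↔ i ≠ j
    fin_cases i <;> fin_cases j <;> simp [h, h.symm]

theorem K2.sym2_embeddingOfAdj {G : SimpleGraph β} {x y : β} (h : G.Adj x y) {i j : Fin 2}
    (hij : K2.Adj i j) : s(K2.embeddingOfAdj h i, K2.embeddingOfAdj h j) = s(x, y) := by
  change i ≠ j at hij
  change s(![x, y] i, ![x, y] j) = s(x, y)
  fin_cases i <;> fin_cases j <;> simp_all [Sym2.eq_swap]

theorem StronglyArrows.of_iso {F : SimpleGraph α} {F' : SimpleGraph α'} {G : SimpleGraph β}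
    {H : SimpleGraph γ} (φ : F' ≃g F) (h : StronglyArrows F G H) : StronglyArrows F' G H := by
  intro c
  rcases h (fun e => c (e.map φ.symm)) with ⟨f, hf⟩ | ⟨f, hf⟩
  · exact Or.inl ⟨φ.symm.toEmbedding.comp f, fun a b hab => by simpa using hf a b hab⟩
  · exact Or.inr ⟨φ.symm.toEmbedding.comp f, fun a b hab => by simpa using hf a b hab⟩

theorem StronglyArrows.exists_adj {F : SimpleGraph α} {G : SimpleGraph β} {H : SimpleGraph γ}
    (hF : StronglyArrows F G H) (hG : ∃ a b, G.Adj a b) (hH : ∃ a b, H.Adj a b) :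
    ∃ u v, F.Adj u v := by
  rcases hF fun _ => true with ⟨f, -⟩ | ⟨f, -⟩
  · obtain ⟨a, b, h⟩ := hG
    exact ⟨f a, f b, f.map_rel_iff.mpr h⟩
  · obtain ⟨a, b, h⟩ := hH
    exact ⟨f a, f b, f.map_rel_iff.mpr h⟩

theorem le_IR {n : ℕ} {G : SimpleGraph β} {H : SimpleGraph γ}
    (hex : ∃ m, ∃ F : SimpleGraph (Fin m), StronglyArrows F G H)
    (h : ∀ m (F : SimpleGraph (Fin m)), StronglyArrows F G H → n ≤ m) : n ≤ IR G H :=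
  le_csInf hex fun m ⟨F, hF⟩ => h m F hF

theorem stronglyArrows_copies_two_twoK2 (G : SimpleGraph β) :
    StronglyArrows (Copies 2 G) G twoK2 := by
  intro c
  by_cases hred : ∃ i : Fin 2, ∀ a b, G.Adj a b → c s((i, a), (i, b)) = true
  · obtain ⟨i, hi⟩ := hred
    exact Or.inl ⟨Copies.incl 2 G i, hi⟩
  · simp only [not_exists, not_forall, Bool.not_eq_true] at hred
    choose a b hab hc using hred
    refine Or.inr ⟨Copies.map fun i => K2.embeddingOfAdj (hab i), ?_⟩
    rintro ⟨i, j⟩ ⟨_, j'⟩ ⟨rfl, hjj'⟩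
    change c s((i, _), (i, _)) = false
    rw [← Sym2.map_mk, K2.sym2_embeddingOfAdj _ hjj', Sym2.map_mk, hc]

theorem exists_stronglyArrows_twoK2 [Fintype β] (G : SimpleGraph β) :
    ∃ m, ∃ F : SimpleGraph (Fin m), StronglyArrows F G twoK2 :=
  let e := Fintype.equivFin (Fin 2 × β)
  ⟨_, (Copies 2 G).map e.toEmbedding,
    (stronglyArrows_copies_two_twoK2 G).of_iso (Iso.map e _).symm⟩

open Classical in
noncomputable def meetColouring (S : Set α) (e : Sym2 α) : Bool := decide (∀ x ∈ e, x ∉ S)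

theorem meetColouring_eq_true {S : Set α} {x y : α} :
    meetColouring S s(x, y) = true ↔ x ∉ S ∧ y ∉ S := by
  simp [meetColouring, Sym2.mem_iff, or_imp, forall_and]

theorem meetColouring_eq_false {S : Set α} {x y : α} :
    meetColouring S s(x, y) = false ↔ x ∈ S ∨ y ∈ S := by
  rw [← Bool.not_eq_true, meetColouring_eq_true]
  tauto

theorem twoK2_embedding_ne_and_not_adj {F : SimpleGraph α} (f : twoK2 ↪g F) (j j' : Fin 2) :
    f (0, j) ≠ f (1, j') ∧ ¬ F.Adj (f (0, j)) (f (1, j')) := by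
  refine ⟨fun h => ?_, fun h => ?_⟩
  · simpa using congrArg Prod.fst (f.injective h)
  · simpa using (f.map_rel_iff.mp h).1

theorem not_forall_meetColouring_eq_false_of_isClique {F : SimpleGraph α} {S : Set α}
    (hS : F.IsClique S) (f : twoK2 ↪g F) :
    ¬ ∀ a b, twoK2.Adj a b → meetColouring S s(f a, f b) = false := by
  intro hblue
  have hmeet (i : Fin 2) : ∃ j, f (i, j) ∈ S :=
    (meetColouring_eq_false.mp (hblue (i, 0) (i, 1) ⟨rfl, Fin.zero_ne_one⟩)).elim
      (⟨0, ·⟩) (⟨1, ·⟩)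
  obtain ⟨j, hj⟩ := hmeet 0
  obtain ⟨j', hj'⟩ := hmeet 1
  obtain ⟨hne, hnadj⟩ := twoK2_embedding_ne_and_not_adj f j j'
  exact hnadj (hS hj hj' hne)

theorem card_add_card_le_of_stronglyArrows [Fintype α] [Fintype β] {F : SimpleGraph α}
    {G : SimpleGraph β} (hG : ∀ v, ∃ w, G.Adj v w) (hF : StronglyArrows F G twoK2)
    {S : Finset α} (hS : F.IsClique (S : Set α)) : Fintype.card β + S.card ≤ Fintype.card α := by
  classical
  rcases hF (meetColouring S) with ⟨f, hred⟩ | ⟨f, hblue⟩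
  · have hf (a : β) : f a ∈ Sᶜ := by
      obtain ⟨b, hab⟩ := hG a
      simpa using (meetColouring_eq_true.mp (hred a b hab)).1
    have hβ := Finset.card_le_card_of_injOn (s := Finset.univ) f (fun a _ => hf a) f.injective.injOn
    rw [Finset.card_compl, Finset.card_univ] at hβ
    have hS_le := S.card_le_univ
    omega
  · exact absurd hblue (not_forall_meetColouring_eq_false_of_isClique hS f)

theorem card_add_two_le_of_stronglyArrows [Fintype α] [Fintype β] [Nonempty β]
    {F : SimpleGraph α} {G : SimpleGraph β} (hG : ∀ v, ∃ w, G.Adj v w)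
    (hF : StronglyArrows F G twoK2) : Fintype.card β + 2 ≤ Fintype.card α := by
  classical
  obtain ⟨a⟩ := ‹Nonempty β›
  obtain ⟨u, v, huv⟩ := hF.exists_adj ⟨a, hG a⟩ ⟨(0, 0), (0, 1), rfl, Fin.zero_ne_one⟩
  have hS : F.IsClique (({u, v} : Finset α) : Set α) := by
    rw [Finset.coe_pair]
    exact isClique_pair.mpr fun _ => huv
  simpa [Finset.card_pair huv.ne] using card_add_card_le_of_stronglyArrows hG hF hS

end

theorem stmt3 {β : Type*} [Fintype β] [Nonempty β] (G : SimpleGraph β)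
    (hG : ∀ v : β, ∃ w : β, G.Adj v w) :
    Fintype.card β + 2 ≤ IR G twoK2 := by
  refine le_IR (exists_stronglyArrows_twoK2 G) fun m F hF => ?_
  simpa using card_add_two_le_of_stronglyArrows hG hF
end

section
/- For every integer n ≥ 5, the cycle C_{n+2} strongly arrows (P_n, 2K_2): every red-blue edge colouring of the cycle on n+2 vertices contains either a red copy of the path P_n as an induced subgraph, or two blue edges at cyclic distance at least two (forming an induced blue 2K_2). -/
/-!
Name the edge `{j, j + 1}` of the cycle by `j`. If two blue edges `i`, `j` satisfy
`3 ≤ j - i ≤ (n + 2) - 3` (cyclically), their four endpoints induce a blue `2K_2`. Otherwise the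
blue edges are pairwise within cyclic distance two, and since the cycle has at least seven edges
they fit into three consecutive edges `k, k + 1, k + 2`. The vertices `k + 3, …, k + n + 2` then
span only red edges, and `n` consecutive vertices of `C_{n+2}` induce a path.
-/

open SimpleGraph

theorem Fin.val_sub_add_val_eq_or {m : ℕ} (a b : Fin m) :
    (a - b).val + b.val = a.val ∨ (a - b).val + b.val = a.val + m := by
  rcases le_or_gt b a with h | h
  · left
    rw [Fin.coe_sub_iff_le.mpr h]
    exact Nat.sub_add_cancel h
  · right
    rw [Fin.coe_sub_iff_lt.mpr h]
    omega

theorem Fin.exists_forall_val_sub_lt_three {m : ℕ} (hm : 7 ≤ m) {B : Set (Fin m)}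
    (hB : ∀ i ∈ B, ∀ j ∈ B, 3 ≤ (j - i).val → m < (j - i).val + 3) :
    ∃ k, ∀ j ∈ B, (j - k).val < 3 := by
  rcases B.eq_empty_or_nonempty with rfl | ⟨i, hi⟩
  · exact ⟨⟨0, by omega⟩, by simp⟩
  have close : ∀ k ∈ B, ∀ j ∈ B, (j - k).val < 3 ∨ m < (j - k).val + 3 := fun k hk j hj =>
    (lt_or_ge _ 3).imp_right (hB k hk j hj)
  have sub := Fin.val_sub_add_val_eq_or (m := m)
  -- All of `B` lies within cyclic distance two of `i`; its leftmost element anchors the window.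
  by_cases h2 : ∃ k ∈ B, (k - i).val + 2 = m
  · obtain ⟨k, hk, hki⟩ := h2
    refine ⟨k, fun j hj => ?_⟩
    have := close i hi j hj; have := close k hk j hj
    have := sub j i; have := sub k i; have := sub j k
    omega
  by_cases h1 : ∃ k ∈ B, (k - i).val + 1 = m
  · obtain ⟨k, hk, hki⟩ := h1
    refine ⟨k, fun j hj => ?_⟩
    have := close i hi j hj; have := close k hk j hj
    have : (j - i).val + 2 ≠ m := fun h => h2 ⟨j, hj, h⟩
    have := sub j i; have := sub k i; have := sub j k
    omega
  refine ⟨i, fun j hj => ?_⟩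
  have := close i hi j hj
  have : (j - i).val + 2 ≠ m := fun h => h2 ⟨j, hj, h⟩
  have : (j - i).val + 1 ≠ m := fun h => h1 ⟨j, hj, h⟩
  omega

theorem twoK2_adj_iff {x y : Fin 2 × Fin 2} : twoK2.Adj x y ↔ x.1 = y.1 ∧ x.2 ≠ y.2 := by
  simp [twoK2, Copies, K2]

namespace SimpleGraph

variable {m : ℕ}

theorem cycleGraph_adj_iff_val {u v : Fin m} :
    (cycleGraph m).Adj u v ↔ u.val ≠ v.val ∧ (u.val + 1 = v.val ∨ v.val + 1 = u.val ∨
      u.val + 1 = v.val + m ∨ v.val + 1 = u.val + m) := by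
  have := Fin.val_sub_add_val_eq_or u v
  have := Fin.val_sub_add_val_eq_or v u
  rw [cycleGraph_adj']
  omega

variable [NeZero m]

theorem cycleGraph_adj_add_right {u v k : Fin m} :
    (cycleGraph m).Adj (u + k) (v + k) ↔ (cycleGraph m).Adj u v := by
  simp only [cycleGraph_adj', add_sub_add_right_eq_sub]

def cycleGraphAddRight (k : Fin m) : cycleGraph m ≃g cycleGraph m :=
  ⟨Equiv.addRight k, cycleGraph_adj_add_right⟩

theorem exists_pathGraph_embedding_cycleGraph {n : ℕ} (h : n < m) (s : Fin m) :
    ∃ f : pathGraph n ↪g cycleGraph m, ∀ a b, (pathGraph n).Adj a b →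
      ∃ t : Fin m, t.val + 1 < n ∧ s(f a, f b) = s(t + s, t + s + 1) := by
  let g : pathGraph n ↪g cycleGraph m :=
    { toEmbedding := Fin.castLEEmb h.le
      map_rel_iff' := fun {a b} => by
        simp only [Fin.castLEEmb_apply, cycleGraph_adj_iff_val, pathGraph_adj, Fin.val_castLE]
        omega }
  have castLE_succ : ∀ a b : Fin n, a.val + 1 = b.val →
      Fin.castLE h.le b = Fin.castLE h.le a + 1 := fun a b hab => by
    have hm : 1 < m := by omega
    ext
    rw [Fin.val_add_eq_of_add_lt] <;> simp [Nat.mod_eq_of_lt hm] <;> omega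
  refine ⟨(cycleGraphAddRight s).toEmbedding.comp g, fun a b hab => ?_⟩
  rcases pathGraph_adj.mp hab with hab | hab
  · refine ⟨Fin.castLE h.le a, by simp; omega, ?_⟩
    simp [g, cycleGraphAddRight, castLE_succ a b hab, add_right_comm]
  · refine ⟨Fin.castLE h.le b, by simp; omega, ?_⟩
    simp [g, cycleGraphAddRight, castLE_succ b a hab, add_right_comm, Sym2.eq_swap]

open Fin.NatCast in
theorem exists_twoK2_embedding_cycleGraph {i j : Fin m} (h3 : 3 ≤ (j - i).val)
    (hm : (j - i).val + 3 ≤ m) :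
    ∃ f : twoK2 ↪g cycleGraph m, ∀ x y, twoK2.Adj x y →
      s(f x, f y) = s(i, i + 1) ∨ s(f x, f y) = s(j, j + 1) := by
  set d := (j - i).val with hd
  -- the edges `{0, 1}` and `{d, d + 1}`, translated by `i`
  let label : Fin 2 × Fin 2 → ℕ := fun x => x.1.val * d + x.2.val
  have val_label : ∀ x, ((label x : ℕ) : Fin m).val = label x := by
    rintro ⟨p, a⟩
    apply Fin.val_cast_of_lt
    fin_cases p <;> fin_cases a <;> simp [label] <;> omega
  let g : twoK2 ↪g cycleGraph m :=
    { toFun := fun x => (label x : Fin m)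
      inj' := by
        rintro ⟨p, a⟩ ⟨q, b⟩ hpq
        have := congrArg Fin.val hpq
        simp only [val_label] at this
        fin_cases p <;> fin_cases q <;> fin_cases a <;> fin_cases b <;> simp [label] at this ⊢ <;>
          omega
      map_rel_iff' := fun {x y} => by
        change (cycleGraph m).Adj (label x : Fin m) (label y) ↔ _
        simp only [cycleGraph_adj_iff_val, twoK2_adj_iff, val_label]
        obtain ⟨p, a⟩ := x
        obtain ⟨q, b⟩ := y
        fin_cases p <;> fin_cases q <;> fin_cases a <;> fin_cases b <;> simp [label] <;> omega }
  let f := (cycleGraphAddRight i).toEmbedding.comp g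
  have f_apply : ∀ x, f x = (label x : Fin m) + i := fun _ => rfl
  have f_zero : f (0, 0) = i := by simp [f_apply, label]
  have f_one : f (1, 0) = j := by simp [f_apply, label, hd]
  have f_succ : ∀ p, f (p, 1) = f (p, 0) + 1 := fun p => by
    simp only [f_apply, label, Fin.val_one, Fin.val_zero, Nat.cast_add, Nat.cast_one, add_zero]
    exact add_right_comm _ _ _
  refine ⟨f, ?_⟩
  rintro ⟨p, a⟩ ⟨q, b⟩ hxy
  obtain ⟨rfl, hab⟩ := twoK2_adj_iff.mp hxy
  have edge : s(f (p, a), f (p, b)) = s(f (p, 0), f (p, 0) + 1) := by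
    rw [← f_succ]
    fin_cases a <;> fin_cases b <;> simp_all [Sym2.eq_swap]
  rw [edge]
  fin_cases p
  · exact Or.inl (by simp [f_zero])
  · exact Or.inr (by simp [f_one])

end SimpleGraph

theorem stmt5 (n : ℕ) (hn : 5 ≤ n) :
    StronglyArrows (SimpleGraph.cycleGraph (n + 2)) (SimpleGraph.pathGraph n) twoK2 := by
  intro c
  set blue : Set (Fin (n + 2)) := {j | c s(j, j + 1) = false}
  by_cases hfar : ∃ i ∈ blue, ∃ j ∈ blue, 3 ≤ (j - i).val ∧ (j - i).val + 3 ≤ n + 2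
  · obtain ⟨i, hi, j, hj, h3, hle⟩ := hfar
    obtain ⟨f, hf⟩ := exists_twoK2_embedding_cycleGraph h3 hle
    refine Or.inr ⟨f, fun x y hxy => ?_⟩
    rcases hf x y hxy with h | h <;> rw [h]
    exacts [hi, hj]
  · push Not at hfar
    obtain ⟨k, hk⟩ := Fin.exists_forall_val_sub_lt_three (by omega) hfar
    obtain ⟨f, hf⟩ := exists_pathGraph_embedding_cycleGraph (by omega : n < n + 2) (k + 3)
    refine Or.inl ⟨f, fun a b hab => ?_⟩
    obtain ⟨t, ht, hedge⟩ := hf a b hab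
    rw [hedge]
    by_contra hred
    have hlt := hk (t + (k + 3)) (by simpa [blue] using hred)
    have hval : ((3 : Fin (n + 2)) : ℕ) = 3 := Nat.mod_eq_of_lt (show 3 < n + 2 by omega)
    have hsum : (t + 3).val = t.val + 3 := by
      rw [Fin.val_add_eq_of_add_lt] <;> rw [hval]
      omega
    rw [show t + (k + 3) - k = t + 3 by abel, hsum] at hlt
    omega
end

section
/- For integers s ≥ 1 and n ≥ 3, IR(sP_3, K_n) ≥ C(n+1,2) + (2s−2)(n−1), where C(n+1,2) = n(n+1)/2. -/
/-!
Lower bound. Say that `A ⊆ V(F)` arrows `(m P₃, K_k)` if every colouring of `F[A]` has `m` red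
induced `P₃`'s, pairwise disjoint and with no edges between them, or a blue `K_k`; we show such an
`A` has at least `C(k+1, 2) + 2(m-1)(k-1)` vertices. The tool is a recolouring: make every edge
inside a union `U` of `T` cliques red and every edge leaving `U` blue. A red `P₃` then lies inside
or outside `U`, at most `T/2` far-apart ones lie inside (each needs two cliques for its ends), and a
blue clique meets `U` in at most one vertex; so `A \ U` arrows `(m' P₃, K_{k-1})` with
`m' = m - T/2`. With `m = 1` and `U` a single `K_k` this gives `C(k+1, 2)` by induction on `k`. For
larger `m`, remove two disjoint `K_k`'s and a maximal packing of at most `2m - 1` disjoint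
`K_{k-1}`'s: either the packing is full and the rest arrows `(P₃, K_{k-1})`, or the rest has no
`K_{k-1}` at all and then still arrows `(m' P₃, K_k)` for some `m' < m`.

Since `sInf ∅ = 0`, the bound also needs some graph arrowing `(s P₃, K_n)`: `s` disjoint copies of
the complete `n`-partite graph with parts of size `n` do.
-/

open SimpleGraph

open Finset

lemma Nat.choose_two_succ (n : ℕ) : (n + 1).choose 2 = n.choose 2 + n := by
  rw [Nat.choose_succ_succ', Nat.choose_one_right, add_comm]

def SimpleGraph.Copies.embed {β : Type*} {G : SimpleGraph β} {s : ℕ} (i : Fin s) :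
    G ↪g Copies s G where
  toFun x := (i, x)
  inj' _ _ h := congrArg Prod.snd h
  map_rel_iff' := ⟨And.right, And.intro rfl⟩

@[simp]
lemma SimpleGraph.Copies.embed_apply {β : Type*} {G : SimpleGraph β} {s : ℕ} (i : Fin s) (x : β) :
    Copies.embed (G := G) i x = (i, x) :=
  rfl

section Cherries

variable {α : Type*} {G : SimpleGraph α}

def IsRedCherryFamily (G : SimpleGraph α) (c : Sym2 α → Bool) (A : Finset α)
    (P : Finset (pathGraph 3 ↪g G)) : Prop :=
  (∀ p ∈ P, ∀ a, p a ∈ A) ∧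
    (∀ p ∈ P, ∀ a b, (pathGraph 3).Adj a b → c s(p a, p b) = true) ∧
    (P : Set (pathGraph 3 ↪g G)).Pairwise fun p q => ∀ a b, p a ≠ q b ∧ ¬ G.Adj (p a) (q b)

def HasBlueClique (G : SimpleGraph α) (c : Sym2 α → Bool) (A : Finset α) (k : ℕ) : Prop :=
  ∃ t ⊆ A, G.IsNClique k t ∧ (t : Set α).Pairwise fun x y => c s(x, y) = false

/-- `StronglyArrows (G.induce A) (Copies m (pathGraph 3)) (⊤ : SimpleGraph (Fin k))`, restated with
the `m` red copies of `P₃` (pairwise disjoint, no edges between them) as a finset, so that they can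
be counted and discarded one by one. -/
def CherryArrows (G : SimpleGraph α) (A : Finset α) (m k : ℕ) : Prop :=
  ∀ c : Sym2 α → Bool, (∃ P, IsRedCherryFamily G c A P ∧ m ≤ #P) ∨ HasBlueClique G c A k

lemma SimpleGraph.pathGraph_three_adj_zero_one : (pathGraph 3).Adj 0 1 := by simp [pathGraph_adj]

lemma SimpleGraph.pathGraph_three_adj_one_two : (pathGraph 3).Adj 1 2 := by simp [pathGraph_adj]

lemma IsRedCherryFamily.filter_avoid [DecidableEq α] {c c' : Sym2 α → Bool} {A U : Finset α}
    {P : Finset (pathGraph 3 ↪g G)} (hP : IsRedCherryFamily G c A P)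
    (hc : ∀ x ∉ U, ∀ y ∉ U, c s(x, y) = c' s(x, y)) :
    IsRedCherryFamily G c' (A \ U) {p ∈ P | ∀ a, p a ∉ U} := by
  obtain ⟨hA, hred, hapart⟩ := hP
  refine ⟨fun p hp a => ?_, fun p hp a b hab => ?_,
    hapart.mono (coe_subset.2 (filter_subset _ _))⟩ <;> rw [mem_filter] at hp
  · exact mem_sdiff.2 ⟨hA p hp.1 a, hp.2 a⟩
  · rw [← hc _ (hp.2 a) _ (hp.2 b)]
    exact hred p hp.1 a b hab

namespace CherryArrows

variable {A : Finset α} {m k : ℕ}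

lemma of_le {m' : ℕ} (h : CherryArrows G A m k) (hm : m' ≤ m) : CherryArrows G A m' k :=
  fun c => (h c).imp (fun ⟨P, hP, hPm⟩ => ⟨P, hP, hm.trans hPm⟩) id

lemma exists_isNClique (h : CherryArrows G A (m + 1) k) : ∃ t ⊆ A, G.IsNClique k t := by
  rcases h fun _ => false with ⟨P, hP, hm⟩ | ⟨t, htA, ht, -⟩
  · obtain ⟨p, hp⟩ := card_pos.1 (by omega : 0 < #P)
    simpa using hP.2.1 p hp 0 1 pathGraph_three_adj_zero_one
  · exact ⟨t, htA, ht⟩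

lemma of_forall_not_isNClique (hA : ∀ t ⊆ A, ¬ G.IsNClique k t) (h : CherryArrows G A m k)
    (k' : ℕ) : CherryArrows G A m k' :=
  fun c => Or.inl ((h c).resolve_right fun ⟨t, htA, ht, _⟩ => hA t htA ht)

end CherryArrows

/-- Each copy of `P₃` inside a union of cliques has its two ends in different cliques, and
far-apart copies cannot share a clique. -/
lemma two_mul_card_le_of_subset_biUnion_cliques [DecidableEq α] {P : Finset (pathGraph 3 ↪g G)}
    {𝒲 : Finset (Finset α)}
    (hapart : (P : Set (pathGraph 3 ↪g G)).Pairwise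
      fun p q => ∀ a b, p a ≠ q b ∧ ¬ G.Adj (p a) (q b))
    (h𝒲 : ∀ W ∈ 𝒲, G.IsClique (W : Set α)) (hP : ∀ p ∈ P, ∀ a, p a ∈ 𝒲.biUnion id) :
    2 * #P ≤ #𝒲 := by
  have hU : ∀ x ∈ 𝒲.biUnion id, ∃ W ∈ 𝒲, x ∈ W := by simp
  choose! w hw𝒲 hw using hU
  have hsame : ∀ x ∈ 𝒲.biUnion id, ∀ y ∈ 𝒲.biUnion id, w x = w y → x = y ∨ G.Adj x y := by
    intro x hx y hy hxy
    by_cases hne : x = y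
    · exact Or.inl hne
    · exact Or.inr (h𝒲 _ (hw𝒲 y hy) (hxy ▸ hw x hx) (hw y hy) hne)
  let e : Bool → Fin 3 := fun b => if b then 0 else 2
  calc 2 * #P = #(P ×ˢ (univ : Finset Bool)) := by simp [mul_comm]
    _ ≤ #𝒲 := by
      refine card_le_card_of_injOn (fun pb => w (pb.1 (e pb.2)))
        (fun pb hpb => hw𝒲 _ (hP _ (mem_product.1 hpb).1 _)) ?_
      rintro ⟨p, b⟩ hpb ⟨q, b'⟩ hqb' hw
      simp only [coe_product, coe_univ, Set.mem_prod, mem_coe, Set.mem_univ, and_true] at hpb hqb'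
      rcases hsame _ (hP p hpb _) _ (hP q hqb' _) hw with h | h
      · by_cases hpq : p = q
        · subst hpq
          cases b <;> cases b' <;> simp_all [e, p.injective.eq_iff]
        · exact absurd h (hapart hpb hqb' hpq _ _).1
      · by_cases hpq : p = q
        · subst hpq
          cases b <;> cases b' <;> simp_all [e, pathGraph_adj]
        · exact absurd h (hapart hpb hqb' hpq _ _).2

end Cherries

section Recolouring

variable {α : Type*} [DecidableEq α] (U : Finset α) (c : Sym2 α → Bool) {x y : α}

def redWithin : Sym2 α → Bool :=
  Sym2.lift ⟨fun x y => if x ∈ U then decide (y ∈ U) else decide (y ∉ U) && c s(x, y),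
    fun x y => by by_cases hx : x ∈ U <;> by_cases hy : y ∈ U <;> simp [hx, hy, Sym2.eq_swap]⟩

def redTouching : Sym2 α → Bool :=
  Sym2.lift ⟨fun x y => decide (x ∈ U) || decide (y ∈ U) || c s(x, y),
    fun x y => by by_cases hx : x ∈ U <;> by_cases hy : y ∈ U <;> simp [hx, hy, Sym2.eq_swap]⟩

variable {U c}

lemma redWithin_of_mem (hx : x ∈ U) (hy : y ∈ U) : redWithin U c s(x, y) = true := by
  simp [redWithin, hx, hy]

lemma redWithin_of_notMem (hx : x ∉ U) (hy : y ∉ U) : redWithin U c s(x, y) = c s(x, y) := by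
  simp [redWithin, hx, hy]

lemma mem_iff_mem_of_redWithin (h : redWithin U c s(x, y) = true) : x ∈ U ↔ y ∈ U := by
  by_cases hx : x ∈ U <;> by_cases hy : y ∈ U <;> simp_all [redWithin]

lemma redTouching_of_mem_left (hx : x ∈ U) : redTouching U c s(x, y) = true := by
  simp [redTouching, hx]

lemma redTouching_of_notMem (hx : x ∉ U) (hy : y ∉ U) : redTouching U c s(x, y) = c s(x, y) := by
  simp [redTouching, hx, hy]

end Recolouring

namespace CherryArrows

variable {α : Type*} [DecidableEq α] {G : SimpleGraph α} {A : Finset α} {m k : ℕ}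

theorem sdiff_biUnion_cliques {𝒲 : Finset (Finset α)} (h𝒲 : ∀ W ∈ 𝒲, G.IsClique (W : Set α))
    (h : CherryArrows G A (m + #𝒲 / 2) (k + 1)) : CherryArrows G (A \ 𝒲.biUnion id) m k := by
  set U := 𝒲.biUnion id
  intro c
  rcases h (redWithin U c) with ⟨P, hP, hPcard⟩ | ⟨Q, hQA, hQ, hQblue⟩
  · refine Or.inl ⟨_, hP.filter_avoid fun x hx y hy => redWithin_of_notMem hx hy, ?_⟩
    have hinside : ∀ p ∈ {p ∈ P | ¬ ∀ a, p a ∉ U}, ∀ a, p a ∈ U := by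
      intro p hp a
      obtain ⟨hpP, b, hb⟩ := by simpa only [mem_filter, not_forall, not_not] using hp
      have h01 := mem_iff_mem_of_redWithin (hP.2.1 p hpP 0 1 pathGraph_three_adj_zero_one)
      have h12 := mem_iff_mem_of_redWithin (hP.2.1 p hpP 1 2 pathGraph_three_adj_one_two)
      fin_cases a <;> fin_cases b <;> simp_all
    have := two_mul_card_le_of_subset_biUnion_cliques
      (hP.2.2.mono (coe_subset.2 (filter_subset _ _))) h𝒲 hinside
    have := card_filter_add_card_filter_not (s := P) (fun p => ∀ a, p a ∉ U)
    omega
  · have hQU : #(Q ∩ U) ≤ 1 := card_le_one.2 fun x hx y hy => by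
      by_contra hxy
      simp only [mem_inter] at hx hy
      simpa [redWithin_of_mem hx.2 hy.2] using hQblue hx.1 hy.1 hxy
    obtain ⟨t, htQ, ht⟩ := exists_subset_card_eq (s := Q \ U) (n := k) (by
      have := card_inter_add_card_sdiff Q U
      have := hQ.card_eq
      omega)
    refine Or.inr ⟨t, fun x hx => ?_, ⟨hQ.isClique.subset ?_, ht⟩, fun x hx y hy hxy => ?_⟩
    · have := mem_sdiff.1 (htQ hx)
      exact mem_sdiff.2 ⟨hQA this.1, this.2⟩
    · exact coe_subset.2 (htQ.trans sdiff_subset)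
    · have hx' := mem_sdiff.1 (htQ hx)
      have hy' := mem_sdiff.1 (htQ hy)
      exact (redWithin_of_notMem hx'.2 hy'.2).symm.trans (hQblue hx'.1 hy'.1 hxy)

/-- Colour every edge meeting the clique `t` red: at most one far-apart red `P₃` meets `t`, and a
blue clique avoids `t`. -/
theorem sdiff_clique {t : Finset α} (ht : G.IsClique (t : Set α)) (hk : 2 ≤ k)
    (h : CherryArrows G A (m + 1) k) : CherryArrows G (A \ t) m k := by
  intro c
  rcases h (redTouching t c) with ⟨P, hP, hPcard⟩ | ⟨Q, hQA, hQ, hQblue⟩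
  · refine Or.inl ⟨_, hP.filter_avoid fun x hx y hy => redTouching_of_notMem hx hy, ?_⟩
    have hmeet : #{p ∈ P | ¬ ∀ a, p a ∉ t} ≤ 1 := card_le_one.2 fun p hp q hq => by
      by_contra hpq
      obtain ⟨hpP, a, ha⟩ := by simpa only [mem_filter, not_forall, not_not] using hp
      obtain ⟨hqP, b, hb⟩ := by simpa only [mem_filter, not_forall, not_not] using hq
      obtain ⟨hne, hnadj⟩ := hP.2.2 hpP hqP hpq a b
      exact hnadj (ht ha hb hne)
    have := card_filter_add_card_filter_not (s := P) (fun p => ∀ a, p a ∉ t)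
    omega
  · have hQt : Disjoint Q t := disjoint_left.2 fun x hxQ hxt => by
      obtain ⟨y, hyQ, hyx⟩ := exists_mem_ne (by rw [hQ.card_eq]; omega) x
      simpa [redTouching_of_mem_left hxt] using hQblue hxQ hyQ hyx.symm
    refine Or.inr ⟨Q, subset_sdiff.2 ⟨hQA, hQt⟩, hQ, fun x hx y hy hxy => ?_⟩
    exact (redTouching_of_notMem (disjoint_left.1 hQt hx) (disjoint_left.1 hQt hy)).symm.trans
      (hQblue hx hy hxy)

theorem choose_two_le_card : ∀ {k : ℕ} {A : Finset α}, CherryArrows G A 1 k → (k + 1).choose 2 ≤ #A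
  | 0, _, _ => by simp
  | k + 1, A, h => by
    obtain ⟨t, htA, ht⟩ := h.exists_isNClique
    have hrest : CherryArrows G (A \ t) 1 k := by
      simpa using sdiff_biUnion_cliques (𝒲 := {t}) (by simpa using ht.isClique) (by simpa using h)
    have := choose_two_le_card hrest
    rw [card_sdiff_of_subset htA, ht.card_eq] at this
    have := ht.card_eq ▸ card_le_card htA
    rw [Nat.choose_two_succ]
    omega

end CherryArrows

theorem exists_maximal_cliquePacking {α : Type*} [DecidableEq α] (G : SimpleGraph α)
    (B : Finset α) {k : ℕ} (hk : 1 ≤ k) (N : ℕ) :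
    ∃ 𝒱 : Finset (Finset α), (∀ V ∈ 𝒱, V ⊆ B ∧ G.IsNClique k V) ∧
      (𝒱 : Set (Finset α)).PairwiseDisjoint id ∧ #𝒱 ≤ N ∧
      (#𝒱 = N ∨ ∀ t ⊆ B \ 𝒱.biUnion id, ¬ G.IsNClique k t) := by
  induction N with
  | zero => exact ⟨∅, by simp, by simp, le_rfl, Or.inl rfl⟩
  | succ N ih =>
    obtain ⟨𝒱, h𝒱, hdisj, hcard, hmax⟩ := ih
    by_cases hfree : ∀ t ⊆ B \ 𝒱.biUnion id, ¬ G.IsNClique k t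
    · exact ⟨𝒱, h𝒱, hdisj, by omega, Or.inr hfree⟩
    have hN : #𝒱 = N := hmax.resolve_right hfree
    obtain ⟨t, htB, ht⟩ : ∃ t ⊆ B \ 𝒱.biUnion id, G.IsNClique k t := by simpa using hfree
    have hdisjt : ∀ V ∈ 𝒱, Disjoint t V := fun V hV => disjoint_left.2 fun x hxt hxV =>
      (mem_sdiff.1 (htB hxt)).2 (mem_biUnion.2 ⟨V, hV, hxV⟩)
    have ht𝒱 : t ∉ 𝒱 := fun ht𝒱 => by
      obtain ⟨x, hx⟩ := card_pos.1 (by rw [ht.card_eq]; omega : 0 < #t)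
      exact disjoint_left.1 (hdisjt t ht𝒱) hx hx
    refine ⟨insert t 𝒱, ?_, ?_, ?_, Or.inl ?_⟩
    · exact forall_mem_insert _ _ _ |>.2 ⟨⟨htB.trans sdiff_subset, ht⟩, h𝒱⟩
    · rw [coe_insert]
      exact hdisj.insert fun V hV _ => hdisjt V hV
    all_goals rw [card_insert_of_notMem ht𝒱]; omega

theorem CherryArrows.choose_two_add_le_card {α : Type*} [DecidableEq α] {G : SimpleGraph α}
    {k : ℕ} (hk : 1 ≤ k) (j : ℕ) {A : Finset α} (h : CherryArrows G A (j + 1) (k + 1)) :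
    (k + 2).choose 2 + 2 * j * k ≤ #A := by
  induction j using Nat.strong_induction_on generalizing A with | _ j ih => ?_
  rcases j with _ | j
  · simpa using h.choose_two_le_card
  obtain ⟨t₁, ht₁A, ht₁⟩ := h.exists_isNClique
  obtain ⟨t₂, ht₂A, ht₂⟩ := (h.sdiff_clique ht₁.isClique (by omega)).exists_isNClique
  obtain ⟨𝒱, h𝒱, h𝒱disj, h𝒱card, hmax⟩ :=
    exists_maximal_cliquePacking G ((A \ t₁) \ t₂) hk (2 * j + 1)
  have hVB : 𝒱.biUnion id ⊆ (A \ t₁) \ t₂ := biUnion_subset.2 fun V hV => (h𝒱 V hV).1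
  have hcard : #A = #(((A \ t₁) \ t₂) \ 𝒱.biUnion id) + (2 * (k + 1) + #𝒱 * k) := by
    have hV : #(𝒱.biUnion id) = #𝒱 * k := by
      rw [card_biUnion h𝒱disj]
      exact sum_const_nat fun V hV => (h𝒱 V hV).2.card_eq
    have := ht₁.card_eq ▸ card_sdiff_add_card_eq_card ht₁A
    have := ht₂.card_eq ▸ card_sdiff_add_card_eq_card ht₂A
    have := hV ▸ card_sdiff_add_card_eq_card hVB
    omega
  have hrest : CherryArrows G (((A \ t₁) \ t₂) \ 𝒱.biUnion id) (j + 2 - (#𝒱 + 2) / 2) k := by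
    have h𝒲 : #(insert t₁ (insert t₂ 𝒱)) ≤ #𝒱 + 2 :=
      (card_insert_le _ _).trans (by have := card_insert_le t₂ 𝒱; omega)
    have := CherryArrows.sdiff_biUnion_cliques (m := j + 2 - (#𝒱 + 2) / 2)
      (𝒲 := insert t₁ (insert t₂ 𝒱))
      (by simpa [ht₁.isClique, ht₂.isClique] using fun V hV => (h𝒱 V hV).2.isClique)
      (h.of_le (by omega))
    simpa [biUnion_insert, sdiff_sdiff_left, union_assoc] using this
  rcases hmax with hfull | hfree
  · have hbase := (hrest.of_le (by omega)).choose_two_le_card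
    rw [hfull] at hcard
    rw [Nat.choose_two_succ]
    linarith
  · set b := (#𝒱 + 2) / 2
    have hrec := ih (j + 1 - b) (by omega)
      ((hrest.of_forall_not_isNClique hfree (k + 1)).of_le (by omega))
    have hb : 2 * (j + 1) ≤ 2 * (j + 1 - b) + (#𝒱 + 2) := by omega
    have := Nat.mul_le_mul_right k hb
    linarith

section Arrowing

variable {α β γ δ : Type*}

theorem StronglyArrows.cherryArrows [Fintype α] [DecidableEq α] {F : SimpleGraph α} {s n : ℕ}
    (h : StronglyArrows F (Copies s (pathGraph 3)) (⊤ : SimpleGraph (Fin n))) :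
    CherryArrows F univ s n := by
  classical
  intro c
  rcases h c with ⟨f, hf⟩ | ⟨f, hf⟩
  · have hinj : Function.Injective fun i => f.comp (Copies.embed i) := fun i i' hii' =>
      congrArg Prod.fst (f.injective (DFunLike.congr_fun hii' 0))
    refine Or.inl ⟨univ.image fun i => f.comp (Copies.embed i), ⟨by simp, ?_, ?_⟩, by
      rw [card_image_of_injective _ hinj, card_fin]⟩
    · simp only [mem_image, mem_univ, true_and, forall_exists_index, forall_apply_eq_imp_iff]
      exact fun i a b hab => hf (i, a) (i, b) ⟨rfl, hab⟩
    · simp only [coe_image, coe_univ, Set.image_univ]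
      rintro _ ⟨i, rfl⟩ _ ⟨i', rfl⟩ hne a b
      have hii' : i ≠ i' := fun hii' => hne (hii' ▸ rfl)
      refine ⟨fun hab => hii' (congrArg Prod.fst (f.injective hab)), fun hab => hii' ?_⟩
      exact (f.map_adj_iff.1 hab).1
  · refine Or.inr ⟨univ.map f.toEmbedding, subset_univ _, ⟨?_, by simp⟩, ?_⟩ <;>
      simp only [coe_map, coe_univ, Set.image_univ] <;> rintro _ ⟨a, rfl⟩ _ ⟨b, rfl⟩ hab <;>
      have hab' : a ≠ b := fun h => hab (h ▸ rfl)
    · exact f.map_adj_iff.2 ((top_adj _ _).2 hab')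
    · exact hf a b ((top_adj _ _).2 hab')

theorem StronglyArrows.of_embedding_s14 {F : SimpleGraph α} {F' : SimpleGraph δ} {G : SimpleGraph β}
    {H : SimpleGraph γ} (e : F ↪g F') (h : StronglyArrows F G H) : StronglyArrows F' G H := by
  intro c
  refine (h fun x => c (x.map e)).imp (fun ⟨f, hf⟩ => ⟨e.comp f, ?_⟩) fun ⟨f, hf⟩ => ⟨e.comp f, ?_⟩
  all_goals simpa using hf

theorem StronglyArrows.copies_s14 {H : SimpleGraph α} {G : SimpleGraph β} {K : SimpleGraph γ}
    (h : StronglyArrows H G K) (s : ℕ) : StronglyArrows (Copies s H) (Copies s G) K := by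
  intro c
  by_cases hred : ∀ i : Fin s, ∃ f : G ↪g H, ∀ a b, G.Adj a b → c s((i, f a), (i, f b)) = true
  · choose f hf using hred
    refine Or.inl ⟨⟨⟨fun x => (x.1, f x.1 x.2), fun x y hxy => ?_⟩, fun {x y} => ?_⟩, ?_⟩
    · obtain ⟨i, a⟩ := x
      obtain ⟨i', b⟩ := y
      obtain rfl : i = i' := congrArg Prod.fst hxy
      simpa using hxy
    · obtain ⟨i, a⟩ := x
      obtain ⟨i', b⟩ := y
      change i = i' ∧ H.Adj (f i a) (f i' b) ↔ i = i' ∧ G.Adj a b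
      constructor <;> rintro ⟨rfl, hab⟩ <;> simpa using hab
    · rintro ⟨i, a⟩ ⟨i', b⟩ ⟨rfl, hab⟩
      exact hf i a b hab
  · obtain ⟨i, hi⟩ := not_forall.1 hred
    rcases h fun e => c (e.map (i, ·)) with ⟨f, hf⟩ | ⟨f, hf⟩
    · exact absurd ⟨f, by simpa using hf⟩ hi
    · exact Or.inr ⟨(Copies.embed i).comp f, by simpa using hf⟩

def SimpleGraph.pathGraphThreeEmbedding {G : SimpleGraph α} {u v w : α} (huv : G.Adj u v)
    (hvw : G.Adj v w) (huw : ¬ G.Adj u w) (hne : u ≠ w) : pathGraph 3 ↪g G where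
  toFun := ![u, v, w]
  inj' a b hab := by
    fin_cases a <;> fin_cases b <;>
      simp_all [G.ne_of_adj huv, G.ne_of_adj hvw, (G.ne_of_adj huv).symm, (G.ne_of_adj hvw).symm]
  map_rel_iff' {a b} := by
    change G.Adj (![u, v, w] a) (![u, v, w] b) ↔ _
    fin_cases a <;> fin_cases b <;>
      simp [pathGraph_adj, huv, hvw, huw, huv.symm, hvw.symm, G.adj_comm w u]

@[simp]
lemma SimpleGraph.pathGraphThreeEmbedding_apply {G : SimpleGraph α} {u v w : α} (huv : G.Adj u v)
    (hvw : G.Adj v w) (huw : ¬ G.Adj u w) (hne : u ≠ w) :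
    ⇑(pathGraphThreeEmbedding huv hvw huw hne) = ![u, v, w] :=
  rfl

theorem exists_blue_transversal [Fintype β] {n : ℕ} (hn : n ≤ Fintype.card β)
    (c : Sym2 (Fin n × β) → Bool)
    (hc : ∀ a b, a ≠ b → ∀ y x x', c s((a, x), (b, y)) = true → c s((a, x'), (b, y)) = true →
      x = x') :
    ∃ g : Fin n → β, ∀ a b, a ≠ b → c s((a, g a), (b, g b)) = false := by
  classical
  suffices ∀ S : Finset (Fin n), ∃ g : Fin n → β, ∀ a ∈ S, ∀ b ∈ S, a ≠ b →
      c s((a, g a), (b, g b)) = false by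
    simpa using this univ
  intro S
  induction S using Finset.induction_on with
  | empty => exact ⟨fun a => (Fintype.equivFin β).symm ⟨a, a.2.trans_le hn⟩, by simp⟩
  | insert a S haS ih =>
    obtain ⟨g, hg⟩ := ih
    let red : Fin n → Finset β := fun b => {x | c s((a, x), (b, g b)) = true}
    have hred : ∀ b ∈ S, #(red b) ≤ 1 := fun b hb => card_le_one.2 fun x hx x' hx' =>
      hc a b (ne_of_mem_of_not_mem hb haS).symm _ _ _ (mem_filter.1 hx).2 (mem_filter.1 hx').2
    have hS : #S < n := by
      simpa [card_insert_of_notMem haS] using card_le_univ (insert a S)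
    have hbad : #(S.biUnion red) < #(univ : Finset β) := by
      calc #(S.biUnion red) ≤ #S * 1 := card_biUnion_le_card_mul _ _ _ hred
        _ < #(univ : Finset β) := by simpa using hS.trans_le hn
    obtain ⟨x, -, hx⟩ := exists_mem_notMem_of_card_lt_card hbad
    have hblue : ∀ b ∈ S, c s((a, x), (b, g b)) = false := fun b hb => by
      simpa [red] using fun h => hx (mem_biUnion.2 ⟨b, hb, mem_filter.2 ⟨mem_univ _, h⟩⟩)
    have hga : ∀ b ∈ S, Function.update g a x b = g b := fun b hb =>
      Function.update_of_ne (ne_of_mem_of_not_mem hb haS) _ _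
    refine ⟨Function.update g a x, ?_⟩
    simp only [mem_insert]
    rintro a' (rfl | ha') b' (rfl | hb') hne
    · exact absurd rfl hne
    · simpa [hga b' hb'] using hblue b' hb'
    · rw [Sym2.eq_swap]
      simpa [hga a' ha'] using hblue a' ha'
    · rw [hga a' ha', hga b' hb']
      exact hg a' ha' b' hb' hne

/-- The complete `n`-partite graph with parts `{a} × β` arrows `(P₃, K_n)` once every part has at
least `n` vertices: without a red induced `P₃`, every vertex has at most one red neighbour in each
other part, so a blue transversal `K_n` can be chosen greedily. -/
theorem stronglyArrows_comap_fst [Fintype β] {n : ℕ} (hn : n ≤ Fintype.card β) :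
    StronglyArrows ((⊤ : SimpleGraph (Fin n)).comap (Prod.fst : Fin n × β → Fin n)) (pathGraph 3)
      (⊤ : SimpleGraph (Fin n)) := by
  intro c
  by_cases hcherry : ∃ a b, a ≠ b ∧ ∃ y x x', x ≠ x' ∧ c s((a, x), (b, y)) = true ∧
      c s((a, x'), (b, y)) = true
  · obtain ⟨a, b, hab, y, x, x', hxx', h₁, h₂⟩ := hcherry
    refine Or.inl ⟨pathGraphThreeEmbedding (u := (a, x)) (v := (b, y)) (w := (a, x'))
      (by simpa using hab) (by simpa using hab.symm) (by simp) (by simpa using hxx'), ?_⟩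
    intro i j hij
    fin_cases i <;> fin_cases j <;> simp_all [pathGraph_adj, Sym2.eq_swap]
  · obtain ⟨g, hg⟩ := exists_blue_transversal hn c fun a b hab y x x' h₁ h₂ =>
      by_contra fun hxx' => hcherry ⟨a, b, hab, y, x, x', hxx', h₁, h₂⟩
    exact Or.inr ⟨⟨⟨fun a => (a, g a), fun a b h => congrArg Prod.fst h⟩, Iff.rfl⟩,
      fun a b hab => hg a b ((top_adj a b).1 hab)⟩

theorem exists_stronglyArrows_copies_pathGraph (s n : ℕ) :
    ∃ N, ∃ F : SimpleGraph (Fin N),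
      StronglyArrows F (Copies s (pathGraph 3)) (⊤ : SimpleGraph (Fin n)) :=
  let H := Copies s ((⊤ : SimpleGraph (Fin n)).comap (Prod.fst : Fin n × Fin n → Fin n))
  ⟨_, H.overFin rfl,
    ((stronglyArrows_comap_fst (by simp)).copies_s14 s).of_embedding_s14 (H.overFinIso rfl).toEmbedding⟩

end Arrowing

theorem stmt14 (s n : ℕ) (hs : 1 ≤ s) (hn : 3 ≤ n) :
    (n + 1).choose 2 + (2 * s - 2) * (n - 1) ≤
      IR (SimpleGraph.Copies s (SimpleGraph.pathGraph 3)) (⊤ : SimpleGraph (Fin n)) := by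
  obtain ⟨j, rfl⟩ : ∃ j, s = j + 1 := ⟨s - 1, by omega⟩
  obtain ⟨k, rfl⟩ : ∃ k, n = k + 1 := ⟨n - 1, by omega⟩
  obtain ⟨N, F₀, hF₀⟩ := exists_stronglyArrows_copies_pathGraph (j + 1) (k + 1)
  refine le_csInf ⟨N, F₀, hF₀⟩ fun m ⟨F, hF⟩ => ?_
  have hbound := hF.cherryArrows.choose_two_add_le_card (by omega) j
  rw [card_univ, Fintype.card_fin] at hbound
  rwa [show (2 * (j + 1) - 2) * (k + 1 - 1) = 2 * j * k by
    rw [Nat.add_sub_cancel, show 2 * (j + 1) - 2 = 2 * j by omega]]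
end

section
/- For any graph G on n vertices, there exists a partition V(G) = V_1 ∪ V_2 such that every induced matching M in G contains at most n/3 edges having both endpoints in V_1 or both endpoints in V_2. -/
open SimpleGraph

/-- `M` is an induced matching in `G`: its edges are edges of `G`, pairwise
vertex-disjoint, and the subgraph induced on the endpoints of `M` is exactly `M`. -/
def SimpleGraph.IsInducedMatching {V : Type*} (G : SimpleGraph V)
    (M : Finset (Sym2 V)) : Prop :=
  (↑M ⊆ G.edgeSet) ∧
  (∀ e ∈ M, ∀ f ∈ M, e ≠ f → ∀ v : V, v ∈ e → v ∉ f) ∧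
  (∀ u v : V, (∃ e ∈ M, u ∈ e) → (∃ e ∈ M, v ∈ e) → G.Adj u v → s(u, v) ∈ M)


/-!
Let `M₀` be a maximum induced matching, of size `m`, and put one endpoint of each of its edges
into `V1`. For an induced matching `M`, at most `|M| ≤ m` of its edges are monochromatic. Each
monochromatic edge of `M` has an endpoint outside `V(M₀)`, for otherwise inducedness of `M₀` puts
it in `M₀`, whose edges are all split. These endpoints are distinct because `M` is a matching, so
at most `n - 2m` edges of `M` are monochromatic, and `min(m, n - 2m) ≤ n / 3`.
-/

open Finset

def Sym2.IsMonochromatic {V : Type*} (V1 : Finset V) (e : Sym2 V) : Prop :=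
  (∀ v ∈ e, v ∈ V1) ∨ (∀ v ∈ e, v ∉ V1)

theorem Set.ncard_setOf_mem_and {α : Type*} (s : Finset α) (p : α → Prop) [DecidablePred p] :
    {x | x ∈ s ∧ p x}.ncard = #(s.filter p) := by
  rw [← Set.ncard_coe_finset, coe_filter]

namespace SimpleGraph

theorem exists_isInducedMatching_forall_card_le {V : Type*} [Fintype V] (G : SimpleGraph V) :
    ∃ M₀, G.IsInducedMatching M₀ ∧ ∀ M, G.IsInducedMatching M → #M ≤ #M₀ := by
  classical
  obtain ⟨M₀, hM₀, hmax⟩ := (univ.filter G.IsInducedMatching).exists_max_image card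
    ⟨∅, by simp [IsInducedMatching]⟩
  exact ⟨M₀, (mem_filter.1 hM₀).2, fun M hM => hmax M (mem_filter.2 ⟨mem_univ M, hM⟩)⟩

namespace IsInducedMatching

variable {V : Type*} {G : SimpleGraph V} {M M₀ : Finset (Sym2 V)}

theorem not_isDiag (hM : G.IsInducedMatching M) {e : Sym2 V} (he : e ∈ M) : ¬e.IsDiag :=
  G.not_isDiag_of_mem_edgeSet (hM.1 he)

theorem eq_of_mem_of_mem (hM : G.IsInducedMatching M) {e f : Sym2 V} (he : e ∈ M) (hf : f ∈ M)
    {v : V} (hve : v ∈ e) (hvf : v ∈ f) : e = f := by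
  by_contra hne
  exact hM.2.1 e he f hf hne v hve hvf

theorem mem_of_forall_mem (hM : G.IsInducedMatching M) {e : Sym2 V} (he : e ∈ G.edgeSet)
    (hcov : ∀ v ∈ e, ∃ f ∈ M, v ∈ f) : e ∈ M := by
  induction e using Sym2.ind with
  | h u v => exact hM.2.2 u v (hcov u (Sym2.mem_mk_left u v)) (hcov v (Sym2.mem_mk_right u v)) he

theorem card_biUnion_toFinset [DecidableEq V] (hM : G.IsInducedMatching M) :
    #(M.biUnion Sym2.toFinset) = 2 * #M := by
  rw [card_biUnion, sum_congr rfl fun e he => Sym2.card_toFinset_of_not_isDiag e (hM.not_isDiag he),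
    sum_const, smul_eq_mul, mul_comm]
  intro e he f hf hne
  exact Finset.disjoint_left.2 fun v hve hvf =>
    hne (hM.eq_of_mem_of_mem he hf (Sym2.mem_toFinset.1 hve) (Sym2.mem_toFinset.1 hvf))

theorem exists_forall_not_isMonochromatic (hM : G.IsInducedMatching M) :
    ∃ V1 : Finset V, ∀ e ∈ M, ¬e.IsMonochromatic V1 := by
  classical
  refine ⟨M.image fun e => e.out.1, fun e he hmono => ?_⟩
  rcases hmono with hin | hout
  · obtain ⟨f, hf, hfe⟩ := mem_image.1 (hin _ e.out_snd_mem)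
    have hef : f = e := hM.eq_of_mem_of_mem hf he (hfe ▸ f.out_fst_mem) e.out_snd_mem
    subst hef
    apply hM.not_isDiag he
    rw [← Quot.out_eq f]
    exact Sym2.mk_isDiag_iff.2 hfe
  · exact hout _ e.out_fst_mem (mem_image_of_mem _ he)

theorem card_filter_isMonochromatic_add_two_mul_card_le [Fintype V] [DecidableEq V]
    {V1 : Finset V} [DecidablePred (Sym2.IsMonochromatic V1)]
    (hM : G.IsInducedMatching M) (hM₀ : G.IsInducedMatching M₀)
    (hV1 : ∀ e ∈ M₀, ¬e.IsMonochromatic V1) :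
    #(M.filter (Sym2.IsMonochromatic V1)) + 2 * #M₀ ≤ Fintype.card V := by
  have hleave : ∀ e ∈ M.filter (Sym2.IsMonochromatic V1),
      ∃ v, v ∈ (M₀.biUnion Sym2.toFinset)ᶜ ∧ v ∈ e := by
    intro e he
    rw [mem_filter] at he
    by_contra! hcov
    refine hV1 e (hM₀.mem_of_forall_mem (hM.1 he.1) fun v hv => ?_) he.2
    by_contra! hv₀
    exact hcov v (by simpa [Sym2.mem_toFinset] using hv₀) hv
  have hcard := card_le_card_of_forall_subsingleton (fun e v => v ∈ e) hleave
    fun v _ e he f hf => hM.eq_of_mem_of_mem (mem_filter.1 he.1).1 (mem_filter.1 hf.1).1 he.2 hf.2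
  rw [card_compl, hM₀.card_biUnion_toFinset] at hcard
  have := hM₀.card_biUnion_toFinset ▸ card_le_univ (M₀.biUnion Sym2.toFinset)
  omega

end IsInducedMatching

end SimpleGraph

theorem stmt16 {V : Type*} [Fintype V] (G : SimpleGraph V) :
    ∃ V1 : Finset V, ∀ M : Finset (Sym2 V), G.IsInducedMatching M →
      3 * Set.ncard {e : Sym2 V | e ∈ M ∧
          ((∀ v ∈ e, v ∈ V1) ∨ (∀ v ∈ e, v ∉ V1))} ≤ Fintype.card V := by
  classical
  obtain ⟨M₀, hM₀, hmax⟩ := G.exists_isInducedMatching_forall_card_le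
  obtain ⟨V1, hV1⟩ := hM₀.exists_forall_not_isMonochromatic
  refine ⟨V1, fun M hM => ?_⟩
  have hle_max := (card_filter_le M (Sym2.IsMonochromatic V1)).trans (hmax M hM)
  have hle_rest := hM.card_filter_isMonochromatic_add_two_mul_card_le hM₀ hV1
  change 3 * {e | e ∈ M ∧ e.IsMonochromatic V1}.ncard ≤ _
  rw [Set.ncard_setOf_mem_and]
  omega
end

section
/- If F is a disconnected graph with components S_1,…,S_m (m ≥ 2) such that F →ind (G, tH) for connected graphs G, H, and for each j, t_j is the largest integer with S_j →ind (G, t_jH), then t_1 + … + t_m ≥ t whenever F is a minimum-order graph strongly arrowing (G, tH). -/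
open SimpleGraph

/-!
Glue, component by component, colourings witnessing `S_j ↛ind (G, (t_j + 1)H)` into one
colouring of `F`. Since `G` is connected, a red induced copy of `G` in `F` would lie inside a
single component, against the choice of its colouring. Since `H` is connected, each of the `t` blue copies of `H` lies
inside a single component, and no component `S_j` can receive more than `t_j` of them; hence
`t ≤ t_1 + ⋯ + t_m`.
-/

open Finset

namespace SimpleGraph

variable {V α β γ δ : Type*} {F : SimpleGraph V} {G : SimpleGraph β} {H : SimpleGraph γ}

def Embedding.codRestrict (f : G ↪g F) (s : Set V) (hs : ∀ x, f x ∈ s) :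
    G ↪g F.induce s where
  toFun x := ⟨f x, hs x⟩
  inj' _ _ h := f.injective (congrArg Subtype.val h)
  map_rel_iff' := f.map_rel_iff

def Embedding.IsMonochromatic (f : G ↪g F) (c : Sym2 V → α) (a : α) : Prop :=
  ∀ x y, G.Adj x y → c s(f x, f y) = a

theorem _root_.stronglyArrows_iff :
    StronglyArrows F G H ↔ ∀ c : Sym2 V → Bool,
      (∃ f : G ↪g F, f.IsMonochromatic c true) ∨
        ∃ f : H ↪g F, f.IsMonochromatic c false :=
  Iff.rfl

theorem _root_.not_stronglyArrows_iff :
    ¬ StronglyArrows F G H ↔ ∃ c : Sym2 V → Bool,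
      (∀ f : G ↪g F, ¬ f.IsMonochromatic c true) ∧
        ∀ f : H ↪g F, ¬ f.IsMonochromatic c false := by
  simp only [stronglyArrows_iff, not_forall, not_or, not_exists]

theorem Preconnected.connectedComponentMk_eq (hG : G.Preconnected) (f : G →g F) (x y : β) :
    F.connectedComponentMk (f x) = F.connectedComponentMk (f y) :=
  ConnectedComponent.sound ((hG x y).map f)

theorem ConnectedComponent.exists_comp_sym2Map_eq
    (c' : ∀ j : F.ConnectedComponent, Sym2 j.supp → α) :
    ∃ c : Sym2 V → α, ∀ j, c ∘ Sym2.map (↑) = c' j := by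
  have (j : F.ConnectedComponent) : Nonempty (Sym2 j.supp) :=
    let ⟨v, hv⟩ := j.nonempty_supp
    ⟨s(⟨v, hv⟩, ⟨v, hv⟩)⟩
  let extend (j : F.ConnectedComponent) : Sym2 V → α :=
    c' j ∘ Function.invFun (Sym2.map (Subtype.val : j.supp → V))
  -- An edge is coloured according to the component of one of its endpoints, `e.out.1`.
  refine ⟨fun e => extend (F.connectedComponentMk e.out.1) e, fun j => funext fun e => ?_⟩
  have hj : F.connectedComponentMk (Sym2.map Subtype.val e).out.1 = j := by
    obtain ⟨v, -, hv⟩ := Sym2.mem_map.1 (Sym2.out_fst_mem (Sym2.map Subtype.val e))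
    rw [← hv]
    exact v.2
  change extend _ (Sym2.map Subtype.val e) = c' j e
  rw [hj]
  exact congrArg (c' j) (Function.leftInverse_invFun (Sym2.map.injective Subtype.val_injective) e)

def Copies.reindex {s t : ℕ} (e : Fin s ↪ Fin t) (H : SimpleGraph γ) :
    Copies s H ↪g Copies t H where
  toFun p := (e p.1, p.2)
  inj' := (e.prodMap (Function.Embedding.refl γ)).injective
  map_rel_iff' {p q} := by
    change e p.1 = e q.1 ∧ H.Adj p.2 q.2 ↔ _
    rw [e.injective.eq_iff]
    rfl

def Copies.incl_s19 {s : ℕ} (i : Fin s) (H : SimpleGraph γ) : H →g Copies s H where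
  toFun y := (i, y)
  map_rel' h := ⟨rfl, h⟩

namespace Embedding.IsMonochromatic

variable {c : Sym2 V → α} {a : α}

theorem comp {f : G ↪g F} (hf : f.IsMonochromatic c a) {G' : SimpleGraph δ} (φ : G' ↪g G) :
    (f.comp φ).IsMonochromatic c a :=
  fun _ _ h => hf _ _ (φ.map_rel_iff.2 h)

theorem codRestrict {f : G ↪g F} (hf : f.IsMonochromatic c a) (s : Set V)
    (hs : ∀ x, f x ∈ s) :
    (f.codRestrict s hs).IsMonochromatic (c ∘ Sym2.map (↑)) a :=
  hf

theorem exists_connectedComponent {f : G ↪g F} (hf : f.IsMonochromatic c a) (hG : G.Connected) :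
    ∃ (j : F.ConnectedComponent) (g : G ↪g F.induce j.supp),
      g.IsMonochromatic (c ∘ Sym2.map (↑)) a := by
  obtain ⟨y⟩ := hG.nonempty
  have hmem (x : β) : f x ∈ (F.connectedComponentMk (f y)).supp :=
    hG.preconnected.connectedComponentMk_eq f.toHom x y
  exact ⟨_, _, hf.codRestrict _ hmem⟩

theorem le_sum_of_copies [Fintype F.ConnectedComponent] {t : ℕ} {f : Copies t H ↪g F}
    (hf : f.IsMonochromatic c a) (hH : H.Connected) (s : F.ConnectedComponent → ℕ)
    (hs : ∀ j (g : Copies (s j + 1) H ↪g F.induce j.supp),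
      ¬ g.IsMonochromatic (c ∘ Sym2.map (↑)) a) :
    t ≤ ∑ j, s j := by
  classical
  obtain ⟨y⟩ := hH.nonempty
  let comp (i : Fin t) : F.ConnectedComponent := F.connectedComponentMk (f (i, y))
  have hcomp (i : Fin t) (x : γ) : f (i, x) ∈ (comp i).supp :=
    hH.preconnected.connectedComponentMk_eq (f.toHom.comp (Copies.incl_s19 i H)) x y
  calc t = ∑ j, #{i | comp i = j} := by
        simpa using card_eq_sum_card_fiberwise (f := comp) (s := univ) (t := univ) (by simp)
    _ ≤ ∑ j, s j := sum_le_sum fun j _ => ?_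
  by_contra! hlt
  obtain ⟨u, hu, hcard⟩ := exists_subset_card_eq hlt
  let e : Fin (s j + 1) ↪ Fin t := (u.orderEmbOfFin hcard).toEmbedding
  have he (k : Fin (s j + 1)) : comp (e k) = j :=
    (mem_filter.1 (hu (u.orderEmbOfFin_mem hcard k))).2
  have hmem (p : Fin (s j + 1) × γ) : f (e p.1, p.2) ∈ j.supp :=
    (ConnectedComponent.mem_supp_iff _ _).2 ((hcomp _ _).trans (he p.1))
  exact hs j _ ((hf.comp (Copies.reindex e H)).codRestrict _ hmem)

end Embedding.IsMonochromatic

end SimpleGraph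

theorem stmt19_general {β γ : Type*}
    (G : SimpleGraph β) (H : SimpleGraph γ) (hG : G.Connected) (hH : H.Connected)
    (t : ℕ)
    (F : SimpleGraph (Fin (IR G (SimpleGraph.Copies t H))))
    [Fintype F.ConnectedComponent]
    (hF : StronglyArrows F G (SimpleGraph.Copies t H))
    (tj : F.ConnectedComponent → ℕ)
    (htj : ∀ c : F.ConnectedComponent,
      StronglyArrows (F.induce c.supp) G (SimpleGraph.Copies (tj c) H) ∧
      ∀ i : ℕ, StronglyArrows (F.induce c.supp) G (SimpleGraph.Copies i H) → i ≤ tj c) :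
    t ≤ ∑ c : F.ConnectedComponent, tj c := by
  have hnot (j : F.ConnectedComponent) :
      ¬ StronglyArrows (F.induce j.supp) G (Copies (tj j + 1) H) :=
    fun h => Nat.not_succ_le_self _ ((htj j).2 _ h)
  choose c' hred hblue using fun j => not_stronglyArrows_iff.1 (hnot j)
  obtain ⟨c, hc⟩ := ConnectedComponent.exists_comp_sym2Map_eq c'
  rcases stronglyArrows_iff.1 hF c with ⟨f, hf⟩ | ⟨f, hf⟩
  · obtain ⟨j, g, hg⟩ := hf.exists_connectedComponent hG
    exact (hred j g (hc j ▸ hg)).elim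
  · exact hf.le_sum_of_copies hH tj fun j g => hc j ▸ hblue j g

theorem stmt19 {β γ : Type*} [Fintype β] [Fintype γ]
    (G : SimpleGraph β) (H : SimpleGraph γ) (hG : G.Connected) (hH : H.Connected)
    (t : ℕ) (ht : 1 ≤ t)
    (F : SimpleGraph (Fin (IR G (SimpleGraph.Copies t H))))
    [Fintype F.ConnectedComponent]
    (hF : StronglyArrows F G (SimpleGraph.Copies t H))
    (hm : 2 ≤ Fintype.card F.ConnectedComponent)
    (tj : F.ConnectedComponent → ℕ)
    (htj : ∀ c : F.ConnectedComponent,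
      StronglyArrows (F.induce c.supp) G (SimpleGraph.Copies (tj c) H) ∧
      ∀ i : ℕ, StronglyArrows (F.induce c.supp) G (SimpleGraph.Copies i H) → i ≤ tj c) :
    t ≤ ∑ c : F.ConnectedComponent, tj c :=
  stmt19_general G H hG hH t F hF tj htj
end
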